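/- If the structural constants satisfy Σ_{j} a i j * a j k = 0 for all i,k ∈ Fin n and b i = 0 for all i ∈ Fin n, then every triple product in the EACP C(a,b) vanishes: (x·y)·z = 0 and x·(y·z) = 0 for all x,y,z ∈ C. -/

import Mathlib

/-- Multiplication of the evolution algebra of a "chicken" population `C(a,b)`
on the space `(Fin n → K) × K`. -/
def eacpMul {K : Type*} [Field K] {n : ℕ} (a : Fin n → Fin n → K) (b : Fin n → K)
    (p q : (Fin n → K) × K) : (Fin n → K) × K :=
  ((1 / 2 : K) • (fun j => ∑ i, (q.2 * p.1 i + p.2 * q.1 i) * a i j),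
   (1 / 2 : K) * ∑ i, (q.2 * p.1 i + p.2 * q.1 i) * b i)

/-! With `b = 0`, the product `p · q` is `(v ᵥ* a, 0)` for `v = ½ (q.2 • p.1 + p.2 • q.1)`.
Multiplying such a product by `z` gives `(z.2 / 2) • (v ᵥ* (a * a))`, and the hypothesis on `a`
says exactly that `a * a = 0`; commutativity handles `x · (y · z) = (y · z) · x`. -/

open Matrix

section

variable {K : Type*} [Field K] {n : ℕ}

theorem eacpMul_comm (a : Fin n → Fin n → K) (b : Fin n → K) (p q : (Fin n → K) × K) :
    eacpMul a b p q = eacpMul a b q p := by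
  simp only [eacpMul, add_comm]

theorem eacpMul_zero_eq_vecMul (a : Matrix (Fin n) (Fin n) K) (p q : (Fin n → K) × K) :
    eacpMul a 0 p q = (((1 / 2 : K) • (q.2 • p.1 + p.2 • q.1)) ᵥ* a, 0) := by
  ext j
  · simp only [eacpMul, vecMul, dotProduct, Pi.smul_apply, Pi.add_apply, smul_eq_mul,
      Finset.mul_sum, mul_assoc]
  · simp [eacpMul]

theorem eacpMul_vecMul_eq_zero {a : Matrix (Fin n) (Fin n) K} (ha : a * a = 0)
    (w : Fin n → K) (z : (Fin n → K) × K) : eacpMul a 0 (w ᵥ* a, 0) z = 0 := by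
  rw [eacpMul_zero_eq_vecMul]
  simp only [smul_zero, zero_smul, add_zero, smul_vecMul, vecMul_vecMul, ha, vecMul_zero,
    Prod.mk_eq_zero, and_self]

end

theorem eacp_triple_products_vanish_general {K : Type*} [Field K]
    {n : ℕ} (a : Fin n → Fin n → K) (b : Fin n → K)
    (ha : ∀ i k : Fin n, ∑ j, a i j * a j k = 0) (hb : ∀ i : Fin n, b i = 0) :
    ∀ x y z : (Fin n → K) × K,
      eacpMul a b (eacpMul a b x y) z = 0 ∧ eacpMul a b x (eacpMul a b y z) = 0 := by
  have hsq : of a * of a = 0 := ext fun i k => by simpa [mul_apply] using ha i k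
  obtain rfl : b = 0 := funext hb
  intro x y z
  constructor
  · rw [eacpMul_zero_eq_vecMul a x y]
    exact eacpMul_vecMul_eq_zero hsq _ z
  · rw [eacpMul_comm, eacpMul_zero_eq_vecMul a y z]
    exact eacpMul_vecMul_eq_zero hsq _ x

theorem eacp_triple_products_vanish {K : Type*} [Field K] (h2 : (2 : K) ≠ 0)
    {n : ℕ} (hn : 1 ≤ n) (a : Fin n → Fin n → K) (b : Fin n → K)
    (ha : ∀ i k : Fin n, ∑ j, a i j * a j k = 0) (hb : ∀ i : Fin n, b i = 0) :
    ∀ x y z : (Fin n → K) × K,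
      eacpMul a b (eacpMul a b x y) z = 0 ∧ eacpMul a b x (eacpMul a b y z) = 0 :=
  eacp_triple_products_vanish_general a b ha hb
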